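/- The functional reduction relation → on CML terms is confluent: if M →* N₁ and M →* N₂, then there exists a term P with N₁ →* P and N₂ →* P. -/
import Mathlib


namespace CML

/-- Types of CML: unit, nat, bool, ref and arrow types. -/
inductive Ty : Type
  | unit | nat | bool | ref
  | arrow (σ τ : Ty)
deriving DecidableEq

/-- Base types are unit, nat and bool. -/
def Ty.IsBase : Ty → Prop
  | .unit => True
  | .nat => True
  | .bool => True
  | _ => False

/-- Terms of CML. `alloc` is the reference-allocation constant `var`. -/
inductive Tm : Type
  | var (x : String)
  | lam (x : String) (M : Tm)
  | app (M N : Tm)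
  | num (n : ℕ)
  | tt | ff | unit
  | Y | bot
  | ite (M N N' : Tm)
  | plus | equal | get | set | alloc
deriving DecidableEq

/-- Values: variables, abstractions, numerals, booleans and unit. -/
inductive IsValue : Tm → Prop
  | var (x) : IsValue (.var x)
  | lam (x M) : IsValue (.lam x M)
  | num (n) : IsValue (.num n)
  | tt : IsValue .tt
  | ff : IsValue .ff
  | unit : IsValue .unit

/-- Substitution M[V/x]. -/
def subst (x : String) (V : Tm) : Tm → Tm
  | .var y => if y = x then V else .var y
  | .lam y M => if y = x then .lam y M else .lam y (subst x V M)
  | .app M N => .app (subst x V M) (subst x V N)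
  | .ite M N N' => .ite (subst x V M) (subst x V N) (subst x V N')
  | M => M

/-- The functional reduction relation of CML: head rules closed under the
evaluation contexts E ::= [ ] | E M | M E | if E then M else N. -/
inductive Step : Tm → Tm → Prop
  | beta {x M V} : IsValue V → Step (.app (.lam x M) V) (subst x V M)
  | plus {n m} : Step (.app (.app .plus (.num n)) (.num m)) (.num (n + m))
  | eq_tt {n} : Step (.app (.app .equal (.num n)) (.num n)) .tt
  | eq_ff {n m} : n ≠ m → Step (.app (.app .equal (.num n)) (.num m)) .ff
  | ite_tt {M N} : Step (.ite .tt M N) M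
  | ite_ff {M N} : Step (.ite .ff M N) N
  | fix {V V'} : IsValue V → IsValue V' →
      Step (.app (.app .Y V) V') (.app (.app V (.app .Y V)) V')
  | appL {M M' N} : Step M M' → Step (.app M N) (.app M' N)
  | appR {M N N'} : Step N N' → Step (.app M N) (.app M N')
  | iteC {M M' N N'} : Step M M' → Step (.ite M N N') (.ite M' N N')

/-- Typing contexts. -/
def Ctx : Type := String → Option Ty

/-- Context extension/update. -/
def Ctx.update (Δ : Ctx) (x : String) (σ : Ty) : Ctx :=
  fun y => if y = x then some σ else Δ y

/-- The typing judgement Δ ⊢ M : σ. -/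
inductive HasType : Ctx → Tm → Ty → Prop
  | var {Δ : Ctx} {x σ} : Δ x = some σ → HasType Δ (.var x) σ
  | lam {Δ : Ctx} {x M σ τ} : HasType (Δ.update x σ) M τ →
      HasType Δ (.lam x M) (.arrow σ τ)
  | app {Δ M N σ τ} : HasType Δ M (.arrow σ τ) → HasType Δ N σ →
      HasType Δ (.app M N) τ
  | bot {Δ σ} : HasType Δ .bot σ
  | Y {Δ σ τ} :
      HasType Δ .Y (.arrow (.arrow (.arrow σ τ) (.arrow σ τ)) (.arrow σ τ))
  | tt {Δ} : HasType Δ .tt .bool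
  | ff {Δ} : HasType Δ .ff .bool
  | ite {Δ M N N' σ} : HasType Δ M .bool → HasType Δ N σ → HasType Δ N' σ →
      HasType Δ (.ite M N N') σ
  | num {Δ n} : HasType Δ (.num n) .nat
  | plus {Δ} : HasType Δ .plus (.arrow .nat (.arrow .nat .nat))
  | equal {Δ} : HasType Δ .equal (.arrow .nat (.arrow .nat .bool))
  | unit {Δ} : HasType Δ .unit .unit
  | alloc {Δ} : HasType Δ .alloc (.arrow .nat .ref)
  | get {Δ} : HasType Δ .get (.arrow .ref .nat)
  | set {Δ} : HasType Δ .set (.arrow .ref (.arrow .nat .unit))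

/-- Δ ⊢ M : σ is semiclosed when σ is a base type and Δ only contains ref. -/
def Semiclosed (Δ : Ctx) (M : Tm) (σ : Ty) : Prop :=
  σ.IsBase ∧ HasType Δ M σ ∧ ∀ x τ, Δ x = some τ → τ = Ty.ref

/-- A machine ⟨⃗y, Δ, M, μ⟩. -/
structure Machine where
  pub : Set String
  ctx : Ctx
  tm : Tm
  mem : String → ℕ

/-- Labels of the CML LTS: silent, reads and writes. -/
inductive Label : Type
  | tau
  | read (x : String) (k : ℕ)
  | write (x : String) (k : ℕ)
deriving DecidableEq

/-- The labelled transition system on CML machines. -/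
inductive MStep : Machine → Label → Machine → Prop
  | base {y : Set String} {Δ : Ctx} {M N μ} : Step M N →
      MStep ⟨y, Δ, M, μ⟩ .tau ⟨y, Δ, N, μ⟩
  | read {y : Set String} {Δ : Ctx} {x : String} {μ : String → ℕ} {α : Label} :
      (Δ x).isSome →
      ((x ∈ y ∧ α = .read x (μ x)) ∨ (x ∉ y ∧ α = .tau)) →
      MStep ⟨y, Δ, .app .get (.var x), μ⟩ α ⟨y, Δ, .num (μ x), μ⟩
  | write {y : Set String} {Δ : Ctx} {x : String} {n : ℕ} {μ : String → ℕ}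
      {α : Label} :
      (Δ x).isSome →
      ((x ∈ y ∧ α = .write x n) ∨ (x ∉ y ∧ α = .tau)) →
      MStep ⟨y, Δ, .app (.app .set (.var x)) (.num n), μ⟩ α
        ⟨y, Δ, .unit, Function.update μ x n⟩
  | alloc {y : Set String} {Δ : Ctx} {n : ℕ} {μ : String → ℕ} {r : String} :
      Δ r = none →
      MStep ⟨y, Δ, .app .alloc (.num n), μ⟩ .tau
        ⟨y, Δ.update r .ref, .var r, Function.update μ r n⟩
  | cxtAppL {y : Set String} {Δ Δ' : Ctx} {M M' N μ μ'} {α : Label} :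
      MStep ⟨y, Δ, M, μ⟩ α ⟨y, Δ', M', μ'⟩ →
      MStep ⟨y, Δ, .app M N, μ⟩ α ⟨y, Δ', .app M' N, μ'⟩
  | cxtAppR {y : Set String} {Δ Δ' : Ctx} {M N N' μ μ'} {α : Label} :
      MStep ⟨y, Δ, N, μ⟩ α ⟨y, Δ', N', μ'⟩ →
      MStep ⟨y, Δ, .app M N, μ⟩ α ⟨y, Δ', .app M N', μ'⟩
  | cxtIte {y : Set String} {Δ Δ' : Ctx} {M M' N N' μ μ'} {α : Label} :
      MStep ⟨y, Δ, M, μ⟩ α ⟨y, Δ', M', μ'⟩ →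
      MStep ⟨y, Δ, .ite M N N', μ⟩ α ⟨y, Δ', .ite M' N N', μ'⟩

/-- Silent steps. -/
def TauStep (m m' : Machine) : Prop := MStep m .tau m'

/-- ⟹ : the reflexive transitive closure of silent steps. -/
def WeakTau : Machine → Machine → Prop := Relation.ReflTransGen TauStep

/-- ⟹α : ⟹ →α ⟹. -/
def WeakStep (α : Label) (m m' : Machine) : Prop :=
  ∃ m₁ m₂, WeakTau m m₁ ∧ MStep m₁ α m₂ ∧ WeakTau m₂ m'

/-- ⟹α̂ : ⟹α when α ≠ τ and ⟹ when α = τ. -/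
def WeakHat (α : Label) (m m' : Machine) : Prop :=
  match α with
  | .tau => WeakTau m m'
  | _ => WeakStep α m m'

/-- A machine of unit type: semiclosed term of type unit, and public
locations drawn from the domain of the context. -/
def Machine.WF (m : Machine) : Prop :=
  Semiclosed m.ctx m.tm Ty.unit ∧ ∀ x ∈ m.pub, (m.ctx x).isSome

/-- Weak bisimulations over machines of unit type. -/
def IsWeakBisim (R : Machine → Machine → Prop) : Prop :=
  ∀ m₁ m₂, R m₁ m₂ →
    m₁.WF ∧ m₂.WF ∧
    (∀ α m₁', MStep m₁ α m₁' → ∃ m₂', WeakHat α m₂ m₂' ∧ R m₁' m₂') ∧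
    (∀ α m₂', MStep m₂ α m₂' → ∃ m₁', WeakHat α m₁ m₁' ∧ R m₁' m₂')

/-- Weak bisimilarity ≈ : the union of all weak bisimulations. -/
def Bisimilar (m₁ m₂ : Machine) : Prop := ∃ R, IsWeakBisim R ∧ R m₁ m₂

/-- Term contexts: terms with a hole. -/
inductive TCtx : Type
  | hole
  | lam (x : String) (C : TCtx)
  | appL (C : TCtx) (N : Tm)
  | appR (M : Tm) (C : TCtx)
  | iteC (C : TCtx) (N N' : Tm)
  | iteL (M : Tm) (C : TCtx) (N' : Tm)
  | iteR (M N : Tm) (C : TCtx)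

/-- Filling the hole of a context with a term. -/
def TCtx.fill : TCtx → Tm → Tm
  | .hole, M => M
  | .lam x C, M => .lam x (C.fill M)
  | .appL C N, M => .app (C.fill M) N
  | .appR P C, M => .app P (C.fill M)
  | .iteC C N N', M => .ite (C.fill M) N N'
  | .iteL P C N', M => .ite P (C.fill M) N'
  | .iteR P N C, M => .ite P N (C.fill M)

/-- Observational equivalence: M ≅ N when for every machine context of unit
type, the resulting machines are weakly bisimilar. -/
def ObsEq (M N : Tm) : Prop :=
  ∀ (y : Set String) (Δ : Ctx) (C : TCtx) (μ : String → ℕ),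
    (Machine.mk y Δ (C.fill M) μ).WF → (Machine.mk y Δ (C.fill N) μ).WF →
    Bisimilar ⟨y, Δ, C.fill M, μ⟩ ⟨y, Δ, C.fill N, μ⟩

/-- Finite terms: no occurrence of Y and no occurrence of ⊥. -/
def Finite : Tm → Prop
  | .lam _ M => Finite M
  | .app M N => Finite M ∧ Finite N
  | .ite M N N' => Finite M ∧ Finite N ∧ Finite N'
  | .Y => False
  | .bot => False
  | _ => True

/-- Normal forms for the functional reduction. -/
def NormalForm (M : Tm) : Prop := ∀ N, ¬ Step M N

end CML

namespace CML

lemma value_not_step {V N : Tm} (hv : IsValue V) (h : Step V N) : False := by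
  cases hv <;> cases h

lemma step_app_plus_num {n : ℕ} {X : Tm} (h : Step (.app .plus (.num n)) X) :
    False := by
  cases h with
  | appL h => cases h
  | appR h => cases h

lemma step_app_equal_num {n : ℕ} {X : Tm} (h : Step (.app .equal (.num n)) X) :
    False := by
  cases h with
  | appL h => cases h
  | appR h => cases h

lemma step_app_Y {V X : Tm} (hv : IsValue V) (h : Step (.app .Y V) X) :
    False := by
  cases h with
  | appL h => cases h
  | appR h => exact value_not_step hv h

lemma step_diamond {a b c : Tm} (h1 : Step a b) (h2 : Step a c) :
    b = c ∨ ∃ d, Step b d ∧ Step c d := by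
  induction h1 generalizing c with
  | @beta x M V hv =>
    cases h2 with
    | beta _ => exact Or.inl rfl
    | appL h => cases h
    | appR h => exact (value_not_step hv h).elim
  | plus =>
    cases h2 with
    | plus => exact Or.inl rfl
    | appL h => exact (step_app_plus_num h).elim
    | appR h => cases h
  | eq_tt =>
    cases h2 with
    | eq_tt => exact Or.inl rfl
    | eq_ff hne => exact absurd rfl hne
    | appL h => exact (step_app_equal_num h).elim
    | appR h => cases h
  | eq_ff hne =>
    cases h2 with
    | eq_tt => exact absurd rfl hne
    | eq_ff _ => exact Or.inl rfl
    | appL h => exact (step_app_equal_num h).elim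
    | appR h => cases h
  | ite_tt =>
    cases h2 with
    | ite_tt => exact Or.inl rfl
    | iteC h => cases h
  | ite_ff =>
    cases h2 with
    | ite_ff => exact Or.inl rfl
    | iteC h => cases h
  | fix hv hv' =>
    cases h2 with
    | fix _ _ => exact Or.inl rfl
    | appL h => exact (step_app_Y hv h).elim
    | appR h => exact (value_not_step hv' h).elim
  | @appL M M' N h ih =>
    cases h2 with
    | beta hv => cases h
    | plus => exact (step_app_plus_num h).elim
    | eq_tt => exact (step_app_equal_num h).elim
    | eq_ff _ => exact (step_app_equal_num h).elim
    | fix hv _ => exact (step_app_Y hv h).elim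
    | appL h' =>
      rcases ih h' with rfl | ⟨d, hd1, hd2⟩
      · exact Or.inl rfl
      · exact Or.inr ⟨.app d N, .appL hd1, .appL hd2⟩
    | appR h' => exact Or.inr ⟨_, .appR h', .appL h⟩
  | @appR M N N' h ih =>
    cases h2 with
    | beta hv => exact (value_not_step hv h).elim
    | plus => cases h
    | eq_tt => cases h
    | eq_ff _ => cases h
    | fix _ hv' => exact (value_not_step hv' h).elim
    | appL h' => exact Or.inr ⟨_, .appL h', .appR h⟩
    | appR h' =>
      rcases ih h' with rfl | ⟨d, hd1, hd2⟩
      · exact Or.inl rfl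
      · exact Or.inr ⟨.app M d, .appR hd1, .appR hd2⟩
  | @iteC M M' N N' h ih =>
    cases h2 with
    | ite_tt => cases h
    | ite_ff => cases h
    | iteC h' =>
      rcases ih h' with rfl | ⟨d, hd1, hd2⟩
      · exact Or.inl rfl
      · exact Or.inr ⟨.ite d N N', .iteC hd1, .iteC hd2⟩

/-- The functional reduction relation of CML is confluent. -/
theorem step_confluent {M N₁ N₂ : Tm}
    (h₁ : Relation.ReflTransGen Step M N₁)
    (h₂ : Relation.ReflTransGen Step M N₂) :
    ∃ P, Relation.ReflTransGen Step N₁ P ∧ Relation.ReflTransGen Step N₂ P := by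
  have key : ∀ a b c : Tm, Step a b → Step a c →
      ∃ d, Relation.ReflGen Step b d ∧ Relation.ReflTransGen Step c d := by
    intro a b c hab hac
    rcases step_diamond hab hac with rfl | ⟨d, hd1, hd2⟩
    · exact ⟨b, .refl, .refl⟩
    · exact ⟨d, .single hd1, .single hd2⟩
  exact Relation.church_rosser key h₁ h₂

end CML
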